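/- Let H be a Hilbert space, Δ a self-adjoint operator on H with eigenvalue λ and normalized eigenvector u, φ a bounded self-adjoint operator (multiplication by a real function) commuting appropriately, and suppose ⟨Δ(e^{εφ}u), e^{εφ}u⟩ = λ‖e^{εφ}u‖² + ε²‖(e^{εφ}u)·dφ‖² holds together with the lower bound ⟨Δv, v⟩ ≥ ⟨Wv, v⟩ for all v, where W is multiplication by a real function w with |dφ|² ≤ [w − λ]₊ pointwise. Then (1 − ε²)∫ [w − λ]₊ e^{2εφ}|u|² ≤ ∫ [w − λ]₋ e^{2εφ}|u|², and in particular (1 − ε²)∫ [w − λ]₊ e^{2εφ}|u|² ≤ ∫ [w − λ]₋ |u|² provided φ = 0 on the set where w ≤ λ. -/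
import Mathlib


open MeasureTheory

/-- Abstract Agmon estimate: if
`∫ (w − λ) e^{2εφ}|u|² ≤ ε² ∫ |dφ|² e^{2εφ}|u|²`, with `|dφ|² ≤ [w−λ]₊` pointwise and
`φ = 0` on the well `{w ≤ λ}`, then
`(1−ε²)∫[w−λ]₊ e^{2εφ}|u|² ≤ ∫[w−λ]₋|u|²`. -/
theorem stmt8 {X : Type*} [MeasurableSpace X] (μ : Measure X)
    (u : X → ℂ) (φ w dphi2 : X → ℝ) (lam ε : ℝ)
    (hε0 : 0 < ε) (hε1 : ε < 1)
    (hdphi_nonneg : ∀ x, 0 ≤ dphi2 x)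
    (hdphi : ∀ x, dphi2 x ≤ max (w x - lam) 0)
    (hwell : ∀ x, w x ≤ lam → φ x = 0)
    (hint1 : Integrable (fun x => max (w x - lam) 0 * Real.exp (2 * ε * φ x) * ‖u x‖^2) μ)
    (hint2 : Integrable (fun x => max (lam - w x) 0 * ‖u x‖^2) μ)
    (hmain : ∫ x, (w x - lam) * Real.exp (2 * ε * φ x) * ‖u x‖^2 ∂μ
      ≤ ε^2 * ∫ x, dphi2 x * Real.exp (2 * ε * φ x) * ‖u x‖^2 ∂μ) :
    (1 - ε^2) * ∫ x, max (w x - lam) 0 * Real.exp (2 * ε * φ x) * ‖u x‖^2 ∂μ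
      ≤ ∫ x, max (lam - w x) 0 * ‖u x‖^2 ∂μ := by
  set A := ∫ x, max (w x - lam) 0 * Real.exp (2 * ε * φ x) * ‖u x‖^2 ∂μ with hA
  set B := ∫ x, max (lam - w x) 0 * ‖u x‖^2 ∂μ with hB
  have hsplit : ∫ x, (w x - lam) * Real.exp (2 * ε * φ x) * ‖u x‖^2 ∂μ = A - B := by
    rw [hA, hB, ← integral_sub hint1 hint2]
    apply integral_congr_ae
    filter_upwards with x
    rcases le_or_gt (w x) lam with h | h
    · have hφ : φ x = 0 := hwell x h
      have h1 : max (w x - lam) 0 = 0 := max_eq_right (by linarith)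
      have h2 : max (lam - w x) 0 = lam - w x := max_eq_left (by linarith)
      simp [hφ, h1, h2]
      ring
    · have h1 : max (w x - lam) 0 = w x - lam := max_eq_left (by linarith)
      have h2 : max (lam - w x) 0 = 0 := max_eq_right (by linarith)
      simp [h1, h2]
  have hbound : ∫ x, dphi2 x * Real.exp (2 * ε * φ x) * ‖u x‖^2 ∂μ ≤ A := by
    apply integral_mono_of_nonneg
    · filter_upwards with x
      exact mul_nonneg (mul_nonneg (hdphi_nonneg x) (Real.exp_pos _).le) (sq_nonneg _)
    · exact hint1
    · filter_upwards with x
      exact mul_le_mul_of_nonneg_right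
        (mul_le_mul_of_nonneg_right (hdphi x) (Real.exp_pos _).le) (sq_nonneg _)
  have hε2 : 0 ≤ ε ^ 2 := sq_nonneg ε
  rw [hsplit] at hmain
  nlinarith [mul_le_mul_of_nonneg_left hbound hε2]
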